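/- Let (X,d) be a metric space with bounded geometry, fix a basepoint x ∈ X, and set V_δ(l) = sup_{x₀ ∈ [x]_δ} |B_δ(x₀, l)|. Then the following dichotomy holds: (i) if lim_{l→∞} (1/l) log V_δ(l) = 0 for all δ > 0, then h_∞(X) = 0; (ii) if there exists δ > 0 such that limsup_{l→∞} (1/l) log V_δ(l) > 0, then h_∞(X) = ∞. -/

import Mathlib

open Filter Set Metric
open scoped ENNReal

noncomputable section

/-- `p` represents a `δ`-pseudoorbit of `f` of length `n` starting at `x₀`:
`(p 0, p 1, …, p n)` with `p 0 = x₀` and `dist (f (p i)) (p (i+1)) ≤ δ` for `i < n`.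
(Only the values `p 0, …, p n` are relevant.) -/
def IsPseudoOrbit {X : Type*} [MetricSpace X] (f : X → X) (δ : ℝ) (n : ℕ) (x₀ : X)
    (p : ℕ → X) : Prop :=
  p 0 = x₀ ∧ ∀ i < n, dist (f (p i)) (p (i + 1)) ≤ δ

/-- The distance between two pseudoorbits of length `n`:
the maximum of `dist (p i) (q i)` over `0 ≤ i ≤ n`. -/
def orbitDist {X : Type*} [MetricSpace X] (n : ℕ) (p q : ℕ → X) : ℝ :=
  (Finset.range (n + 1)).sup' (by simp) fun i => dist (p i) (q i)

/-- A family `S` of pseudoorbits of length `n` is `R`-separated if any two distinct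
members are at pseudoorbit distance at least `R`. -/
def IsSepFamily {X : Type*} [MetricSpace X] (n : ℕ) (R : ℝ) (S : Set (ℕ → X)) : Prop :=
  ∀ p ∈ S, ∀ q ∈ S, p ≠ q → R ≤ orbitDist n p q

/-- `sepCard f n R δ x₀` is `s(f,n,R,δ,x₀)`: the supremum of cardinalities of
`R`-separated sets of `δ`-pseudoorbits of `f` of length `n` starting at `x₀`. -/
def sepCard {X : Type*} [MetricSpace X] (f : X → X) (n : ℕ) (R δ : ℝ) (x₀ : X) : ℝ≥0∞ :=
  ⨆ (S : Set (ℕ → X)) (_ : ∀ p ∈ S, IsPseudoOrbit f δ n x₀ p) (_ : IsSepFamily n R S),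
    (S.encard : ℝ≥0∞)

/-- Extended logarithm `[0,∞] → [0,∞]` (negative values are truncated to `0`). -/
def elog (x : ℝ≥0∞) : ℝ≥0∞ :=
  if x = ⊤ then ⊤ else ENNReal.ofReal (Real.log x.toReal)

/-- The coarse entropy of `f : X → X` computed at the basepoint `x₀`:
`h_∞(f) = lim_{δ→∞} lim_{R→∞} limsup_{n→∞} (1/n) log s(f,n,R,δ,x₀)`.
Since `s` is nondecreasing in `δ` and nonincreasing in `R`, the limits in `δ` and `R`
are the supremum over `δ > 0` and the infimum over `R > 0`, respectively. -/
def coarseEntropyAt {X : Type*} [MetricSpace X] (f : X → X) (x₀ : X) : ℝ≥0∞ :=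
  ⨆ (δ : ℝ) (_ : 0 < δ), ⨅ (R : ℝ) (_ : 0 < R),
    Filter.atTop.limsup fun n : ℕ => elog (sepCard f n R δ x₀) / (n : ℝ≥0∞)

end

/-- The `δ`-ball of radius `n` around `x₀`: the set of endpoints of `δ`-paths of
length `n` starting at `x₀`. -/
def stepBall {X : Type*} [MetricSpace X] (δ : ℝ) (x₀ : X) (n : ℕ) : Set X :=
  {y | ∃ p : ℕ → X, p 0 = x₀ ∧ p n = y ∧ ∀ i < n, dist (p i) (p (i + 1)) ≤ δ}

/-- The `δ`-component of `x`: all points connected to `x` by some `δ`-path. -/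
def deltaComponent {X : Type*} [MetricSpace X] (δ : ℝ) (x : X) : Set X :=
  {y | ∃ n : ℕ, y ∈ stepBall δ x n}

/-- A metric space has bounded geometry if for every radius `r > 0` there is a uniform
bound `C(r) ∈ ℕ` on the cardinalities of closed balls of radius `r`. -/
def HasBoundedGeometry (X : Type*) [MetricSpace X] : Prop :=
  ∀ r : ℝ, 0 < r → ∃ C : ℕ, ∀ x : X, (Metric.closedBall x r).encard ≤ C

/-- `V_δ^x(l) = sup_{x₀ ∈ [x]_δ} |B_δ(x₀, l)|` (as an extended nonnegative real). -/
noncomputable def Vgrowth {X : Type*} [MetricSpace X] (δ : ℝ) (x : X) (l : ℕ) : ℝ≥0∞ :=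
  ⨆ x₀ ∈ deltaComponent δ x, ((stepBall δ x₀ l).encard : ℝ≥0∞)

/-!
(i) If `R > 2kδ`, two `δ`-paths from the same point are less than `R` apart during their first
`k` steps, so an `R`-separated family of `δ`-paths is determined, `k` steps at a time, by the
positions at times `k, 2k, …`, each lying in a ball `B_δ(·, k)` around a point of `[x]_δ`. Hence
`s(n, R, δ) ≤ V_δ(k)^(n/k+1)`, and the entropy at scale `δ` is at most `2 log V_δ(k) / k → 0`.

(ii) By bounded geometry, a maximal `R`-separated subset of `B_δ(x₀, l)` has at least
`|B_δ(x₀, l)| / C(R)` points. Reaching `x₀` and then running `j` loops of length `2l` from `x₀` out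
to one of these points and back gives `N^j` pairwise `R`-separated `δ`-paths, so if
`|B_δ(x₀, l)| > e^{rl}` for infinitely many `l`, the entropy at scale `δ` is at least `r/4`. As
`B_δ(x₀, κl) ⊆ B_{κδ}(x₀, l)`, growth rate `r` at scale `δ` gives rate `κr/2` at scale `κδ`, and
`κ → ∞` forces `h_∞ = ∞`.
-/

section DeltaPath

variable {X : Type*} [PseudoMetricSpace X]

def IsDeltaPath (δ : ℝ) (n : ℕ) (p : ℕ → X) : Prop :=
  ∀ i < n, dist (p i) (p (i + 1)) ≤ δ

namespace IsDeltaPath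

variable {δ : ℝ} {n : ℕ} {p q : ℕ → X}

theorem mono_length (hp : IsDeltaPath δ n p) {m : ℕ} (hmn : m ≤ n) : IsDeltaPath δ m p :=
  fun i hi => hp i (hi.trans_le hmn)

theorem const (hδ : 0 ≤ δ) (y : X) : IsDeltaPath δ n fun _ => y :=
  fun _ _ => by simpa using hδ

theorem dist_le (hp : IsDeltaPath δ n p) {a b : ℕ} (hab : a ≤ b) (hb : b ≤ n) :
    dist (p a) (p b) ≤ (b - a : ℕ) * δ :=
  calc dist (p a) (p b) ≤ ∑ i ∈ Finset.Ico a b, dist (p i) (p (i + 1)) :=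
        dist_le_Ico_sum_dist p hab
    _ ≤ ∑ _i ∈ Finset.Ico a b, δ :=
        Finset.sum_le_sum fun i hi => hp i (by rw [Finset.mem_Ico] at hi; omega)
    _ = (b - a : ℕ) * δ := by simp

theorem dist_le_two_mul (hp : IsDeltaPath δ n p) (hq : IsDeltaPath δ n q) (h0 : p 0 = q 0)
    {i : ℕ} (hi : i ≤ n) : dist (p i) (q i) ≤ 2 * i * δ :=
  calc dist (p i) (q i) ≤ dist (p 0) (p i) + dist (q 0) (q i) := by
        rw [dist_comm (p 0), h0]; exact dist_triangle _ _ _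
    _ ≤ i * δ + i * δ := add_le_add (by simpa using hp.dist_le (Nat.zero_le i) hi)
        (by simpa using hq.dist_le (Nat.zero_le i) hi)
    _ = 2 * i * δ := by ring

theorem append {m : ℕ} (hp : IsDeltaPath δ m p) (hq : IsDeltaPath δ n q) (hpq : p m = q 0) :
    IsDeltaPath δ (m + n) fun i => if i < m then p i else q (i - m) := by
  intro i hi
  rcases lt_trichotomy (i + 1) m with h | h | h
  · simpa [h, (Nat.lt_succ_self i).trans h] using hp i (by omega)
  · simpa [h, show i < m by omega, hpq] using hp i (by omega)
  · simpa [show ¬ i < m by omega, show ¬ i + 1 < m by omega, Nat.sub_add_comm (by omega : m ≤ i)]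
      using hq (i - m) (by omega)

theorem shift (hp : IsDeltaPath δ n p) (k : ℕ) : IsDeltaPath δ (n - k) fun i => p (i + k) :=
  fun i hi => by simpa [Nat.add_right_comm] using hp (i + k) (by omega)

theorem reverse (hp : IsDeltaPath δ n p) : IsDeltaPath δ n fun i => p (n - i) := by
  intro i hi
  simpa [dist_comm, show n - i = n - (i + 1) + 1 by omega] using hp (n - (i + 1)) (by omega)

theorem comp_min (hδ : 0 ≤ δ) (hp : IsDeltaPath δ n p) (m : ℕ) :
    IsDeltaPath δ m fun i => p (min i n) := by
  intro i _
  rcases lt_or_ge i n with hi | hi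
  · simpa [min_eq_left hi.le, min_eq_left (Nat.succ_le_of_lt hi)] using hp i hi
  · simpa [min_eq_right hi, min_eq_right (hi.trans i.le_succ)] using hδ

theorem comp_mul {j : ℕ} (hp : IsDeltaPath δ (j * n) p) :
    IsDeltaPath (j * δ) n fun i => p (j * i) := by
  intro i hi
  simpa [Nat.mul_succ] using hp.dist_le (Nat.mul_le_mul_left j (Nat.le_succ i))
    (Nat.mul_le_mul_left j (Nat.succ_le_of_lt hi))

theorem periodic {L : ℕ} (hL : 0 < L) {c : ℕ → ℕ → X} {z : X} (hc : ∀ q, IsDeltaPath δ L (c q))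
    (hc0 : ∀ q, c q 0 = z) (hcL : ∀ q, c q L = z) : IsDeltaPath δ n fun i => c (i / L) (i % L) := by
  intro i _
  obtain ⟨q, s, hs, rfl⟩ : ∃ q s, s < L ∧ i = L * q + s :=
    ⟨i / L, i % L, Nat.mod_lt i hL, (Nat.div_add_mod i L).symm⟩
  have hi : (L * q + s) / L = q ∧ (L * q + s) % L = s := by
    simp [Nat.mul_add_div hL, Nat.div_eq_of_lt hs, Nat.mod_eq_of_lt hs]
  rcases (show s + 1 ≤ L from hs).lt_or_eq with h | h
  · have hi' : (L * q + (s + 1)) / L = q ∧ (L * q + (s + 1)) % L = s + 1 := by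
      simp [Nat.mul_add_div hL, Nat.div_eq_of_lt h, Nat.mod_eq_of_lt h]
    simpa [hi, hi', add_assoc] using hc q s hs
  · have hi' : (L * q + s + 1) / L = q + 1 ∧ (L * q + s + 1) % L = 0 := by
      rw [add_assoc, h, ← mul_add_one]
      simp [hL.ne']
    dsimp only
    rw [hi.1, hi.2, hi'.1, hi'.2, hc0]
    have hstep := hc q s hs
    rwa [h, hcL] at hstep

end IsDeltaPath

end DeltaPath

section StepBall

variable {X : Type*} [MetricSpace X] {δ : ℝ} {x x₀ y z : X} {l m n : ℕ}

theorem self_mem_deltaComponent (δ : ℝ) (x : X) : x ∈ deltaComponent δ x :=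
  ⟨0, fun _ => x, rfl, rfl, fun _ h => absurd h (Nat.not_lt_zero _)⟩

theorem stepBall_mono_length (hδ : 0 ≤ δ) (hnm : n ≤ m) : stepBall δ x₀ n ⊆ stepBall δ x₀ m := by
  rintro y ⟨p, hp0, rfl, hp⟩
  exact ⟨fun i => p (min i n), by simpa using hp0, by simp [min_eq_right hnm],
    IsDeltaPath.comp_min hδ hp m⟩

theorem stepBall_mono {δ' : ℝ} (h : δ ≤ δ') : stepBall δ x₀ n ⊆ stepBall δ' x₀ n := by
  rintro y ⟨p, hp0, hpn, hp⟩
  exact ⟨p, hp0, hpn, fun i hi => (hp i hi).trans h⟩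

theorem deltaComponent_mono {δ' : ℝ} (h : δ ≤ δ') : deltaComponent δ x ⊆ deltaComponent δ' x :=
  fun _ ⟨n, hn⟩ => ⟨n, stepBall_mono h hn⟩

theorem stepBall_trans (hy : y ∈ stepBall δ x₀ m) (hz : z ∈ stepBall δ y n) :
    z ∈ stepBall δ x₀ (m + n) := by
  obtain ⟨p, hp0, rfl, hp⟩ := hy
  obtain ⟨q, hq0, rfl, hq⟩ := hz
  refine ⟨_, ?_, by simp, IsDeltaPath.append hp hq hq0.symm⟩
  rcases Nat.eq_zero_or_pos m with rfl | hm
  · simp [hq0, hp0]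
  · simp [hm, hp0]

theorem mem_deltaComponent_of_mem_stepBall (hx₀ : x₀ ∈ deltaComponent δ x)
    (hy : y ∈ stepBall δ x₀ l) : y ∈ deltaComponent δ x :=
  let ⟨n, hn⟩ := hx₀
  ⟨n + l, stepBall_trans hn hy⟩

theorem stepBall_subset_closedBall : stepBall δ x₀ n ⊆ closedBall x₀ (n * δ) := by
  rintro y ⟨p, rfl, rfl, hp : IsDeltaPath δ n p⟩
  simpa [dist_comm] using hp.dist_le (Nat.zero_le n) le_rfl

theorem stepBall_mul_subset (j : ℕ) : stepBall δ x₀ (j * n) ⊆ stepBall (j * δ) x₀ n := by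
  rintro y ⟨p, rfl, rfl, hp : IsDeltaPath δ (j * n) p⟩
  exact ⟨fun i => p (j * i), by simp, rfl, hp.comp_mul⟩

theorem exists_loop (hy : y ∈ stepBall δ x₀ l) :
    ∃ c : ℕ → X, c 0 = x₀ ∧ c l = y ∧ c (2 * l) = x₀ ∧ IsDeltaPath δ (2 * l) c := by
  obtain ⟨p, hp0, rfl, hp : IsDeltaPath δ l p⟩ := hy
  have hc := hp.append hp.reverse (by simp)
  rw [← two_mul] at hc
  refine ⟨_, ?_, by simp, by simp [two_mul, hp0], hc⟩
  rcases Nat.eq_zero_or_pos l with rfl | hl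
  · simp [hp0]
  · simp [hl, hp0]

theorem HasBoundedGeometry.finite_stepBall (hbg : HasBoundedGeometry X) (δ : ℝ) (x₀ : X)
    (n : ℕ) : (stepBall δ x₀ n).Finite := by
  obtain ⟨C, hC⟩ := hbg (max (n * δ) 1) (lt_max_of_lt_right one_pos)
  exact Set.finite_of_encard_le_coe <| (Set.encard_le_encard <| stepBall_subset_closedBall.trans
    (closedBall_subset_closedBall (le_max_left _ _))).trans (hC x₀)

theorem encard_stepBall_le_Vgrowth (hx₀ : x₀ ∈ deltaComponent δ x) (l : ℕ) :
    ((stepBall δ x₀ l).encard : ℝ≥0∞) ≤ Vgrowth δ x l :=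
  le_iSup₂ (f := fun x₀ _ => ((stepBall δ x₀ l).encard : ℝ≥0∞)) x₀ hx₀

theorem Vgrowth_le_Vgrowth_mul (hδ : 0 ≤ δ) {j l' : ℕ} (hj : 1 ≤ j) (h : l' ≤ j * l) :
    Vgrowth δ x l' ≤ Vgrowth (j * δ) x l :=
  iSup₂_le fun x₀ hx₀ => le_trans (ENat.toENNReal_mono <| Set.encard_le_encard <|
      (stepBall_mono_length hδ h).trans (stepBall_mul_subset j))
    (encard_stepBall_le_Vgrowth
      (deltaComponent_mono (le_mul_of_one_le_left hδ (by exact_mod_cast hj)) hx₀) l)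

end StepBall

theorem elog_mono {a b : ℝ≥0∞} (h : a ≤ b) : elog a ≤ elog b := by
  unfold elog
  rcases eq_or_ne b ⊤ with rfl | hb
  · simp
  rw [if_neg (ne_top_of_le_ne_top hb h), if_neg hb]
  rcases le_or_gt a.toReal 1 with ha | ha
  · simp [ENNReal.ofReal_eq_zero.2 (Real.log_nonpos ENNReal.toReal_nonneg ha)]
  · exact ENNReal.ofReal_le_ofReal <|
      Real.log_le_log (by linarith) (ENNReal.toReal_mono hb h)

theorem elog_pow (a : ℝ≥0∞) (m : ℕ) : elog (a ^ m) = m * elog a := by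
  rcases Nat.eq_zero_or_pos m with rfl | hm
  · simp [elog]
  rcases eq_or_ne a ⊤ with rfl | ha
  · simp [elog, ENNReal.top_pow hm.ne', ENNReal.mul_top (Nat.cast_ne_zero.2 hm.ne')]
  unfold elog
  rw [if_neg (ENNReal.pow_ne_top ha), if_neg ha, ENNReal.toReal_pow, Real.log_pow]
  rcases le_or_gt (Real.log a.toReal) 0 with h | h
  · rw [ENNReal.ofReal_eq_zero.2 h, mul_zero, ENNReal.ofReal_eq_zero.2
      (mul_nonpos_of_nonneg_of_nonpos (Nat.cast_nonneg m) h)]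
  · rw [ENNReal.ofReal_mul (Nat.cast_nonneg m), ENNReal.ofReal_natCast]

theorem elog_natCast (N : ℕ) : elog N = ENNReal.ofReal (Real.log N) := by
  simp [elog]

theorem elog_ofReal_exp (r : ℝ) : elog (ENNReal.ofReal (Real.exp r)) = ENNReal.ofReal r := by
  simp [elog, (Real.exp_pos r).le]

theorem ofReal_exp_lt_of_ofReal_lt_elog {r : ℝ} {a : ℝ≥0∞} (h : ENNReal.ofReal r < elog a) :
    ENNReal.ofReal (Real.exp r) < a := by
  by_contra! ha
  exact (elog_ofReal_exp r ▸ elog_mono ha).not_gt h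

theorem Set.encard_le_encard_mul_of_mapsTo {α β : Type*} {S : Set α} {T : Set β} {f : α → β}
    (hT : T.Finite) (hf : MapsTo f S T) {c : ℝ≥0∞}
    (hc : ∀ b ∈ T, ((S ∩ f ⁻¹' {b}).encard : ℝ≥0∞) ≤ c) : (S.encard : ℝ≥0∞) ≤ T.encard * c := by
  have hcover : S ⊆ ⋃ b ∈ hT.toFinset, S ∩ f ⁻¹' {b} := fun a ha =>
    Set.mem_biUnion (hT.mem_toFinset.2 (hf ha)) ⟨ha, rfl⟩
  calc (S.encard : ℝ≥0∞) ≤ ((∑ b ∈ hT.toFinset, (S ∩ f ⁻¹' {b}).encard : ℕ∞) : ℝ≥0∞) :=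
        ENat.toENNReal_mono <|
          (Set.encard_le_encard hcover).trans (Finset.set_encard_biUnion_le _ _)
    _ = ∑ b ∈ hT.toFinset, ((S ∩ f ⁻¹' {b}).encard : ℝ≥0∞) := map_sum ENat.toENNRealRingHom _ _
    _ ≤ ∑ _b ∈ hT.toFinset, c := Finset.sum_le_sum fun b hb => hc b (hT.mem_toFinset.1 hb)
    _ = T.encard * c := by simp [hT.encard_eq_coe_toFinset_card]

section SepCard

variable {X : Type*} [MetricSpace X] {δ R : ℝ} {k n : ℕ} {x x₀ : X} {p q : ℕ → X}
  {S : Set (ℕ → X)}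

theorem le_orbitDist_iff : R ≤ orbitDist n p q ↔ ∃ i ≤ n, R ≤ dist (p i) (q i) := by
  simp [orbitDist, Finset.le_sup'_iff]

theorem isPseudoOrbit_id_iff : IsPseudoOrbit id δ n x₀ p ↔ p 0 = x₀ ∧ IsDeltaPath δ n p :=
  Iff.rfl

theorem le_sepCard {f : X → X} (hS : ∀ p ∈ S, IsPseudoOrbit f δ n x₀ p)
    (hsep : IsSepFamily n R S) : (S.encard : ℝ≥0∞) ≤ sepCard f n R δ x₀ :=
  le_iSup₂_of_le S hS (le_iSup_of_le hsep le_rfl)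

theorem sepCard_le {f : X → X} {c : ℝ≥0∞}
    (h : ∀ S : Set (ℕ → X), (∀ p ∈ S, IsPseudoOrbit f δ n x₀ p) → IsSepFamily n R S →
      (S.encard : ℝ≥0∞) ≤ c) : sepCard f n R δ x₀ ≤ c :=
  iSup₂_le fun S hS => iSup_le (h S hS)

theorem exists_le_dist_shift (hδ : 0 ≤ δ) (hR : 2 * k * δ < R) (hk : k ≤ n)
    (hp : IsPseudoOrbit id δ n x₀ p) (hq : IsPseudoOrbit id δ n x₀ q) (hpq : R ≤ orbitDist n p q) :
    ∃ i ≤ n - k, R ≤ dist (p (i + k)) (q (i + k)) := by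
  obtain ⟨i, hin, hi⟩ := le_orbitDist_iff.1 hpq
  have hki : k ≤ i := by
    by_contra! hik
    rw [isPseudoOrbit_id_iff] at hp hq
    have hclose := hp.2.dist_le_two_mul hq.2 (hp.1.trans hq.1.symm) hin
    have : 2 * i * δ ≤ 2 * k * δ := by gcongr
    linarith
  exact ⟨i - k, by omega, by rwa [Nat.sub_add_cancel hki]⟩

theorem injOn_shift_of_isSepFamily (hδ : 0 ≤ δ) (hR : 2 * k * δ < R) (hk : k ≤ n)
    (hS : ∀ p ∈ S, IsPseudoOrbit id δ n x₀ p) (hsep : IsSepFamily n R S) :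
    S.InjOn fun p i => p (i + k) := by
  intro p hp q hq hpq
  by_contra hne
  obtain ⟨i, -, hi⟩ := exists_le_dist_shift hδ hR hk (hS p hp) (hS q hq) (hsep p hp q hq hne)
  rw [show p (i + k) = q (i + k) from congrFun hpq i, dist_self] at hi
  have : 0 ≤ 2 * k * δ := by positivity
  linarith

theorem isSepFamily_image_shift (hδ : 0 ≤ δ) (hR : 2 * k * δ < R) (hk : k ≤ n)
    (hS : ∀ p ∈ S, IsPseudoOrbit id δ n x₀ p) (hsep : IsSepFamily n R S) :
    IsSepFamily (n - k) R ((fun p i => p (i + k)) '' S) := by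
  rintro _ ⟨p, hp, rfl⟩ _ ⟨q, hq, rfl⟩ hne
  obtain ⟨i, hi, hd⟩ := exists_le_dist_shift hδ hR hk (hS p hp) (hS q hq)
    (hsep p hp q hq fun h => hne (h ▸ rfl))
  exact le_orbitDist_iff.2 ⟨i, hi, hd⟩

theorem encard_le_Vgrowth_pow (hbg : HasBoundedGeometry X) (hδ : 0 ≤ δ) (hR : 2 * k * δ < R)
    {m : ℕ} (hn : n ≤ m * k) (hx₀ : x₀ ∈ deltaComponent δ x)
    (hS : ∀ p ∈ S, IsPseudoOrbit id δ n x₀ p) (hsep : IsSepFamily n R S) :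
    (S.encard : ℝ≥0∞) ≤ Vgrowth δ x k ^ m := by
  induction m generalizing n x₀ S with
  | zero =>
    obtain rfl : n = 0 := by simpa using hn
    have hS1 : S.encard ≤ 1 := Set.encard_le_one_iff.2 fun p q hp hq => by
      by_contra hne
      obtain ⟨i, hi, hd⟩ := le_orbitDist_iff.1 (hsep p hp q hq hne)
      obtain rfl : i = 0 := Nat.le_zero.1 hi
      rw [(hS p hp).1, (hS q hq).1, dist_self] at hd
      have : 0 ≤ 2 * k * δ := by positivity
      linarith
    rw [pow_zero]
    exact_mod_cast hS1
  | succ m ih =>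
    set k' := min k n with hk'
    have hR' : 2 * k' * δ < R := lt_of_le_of_lt (by gcongr; exact min_le_left k n) hR
    have hmaps : MapsTo (fun p => p k') S (stepBall δ x₀ k) := fun p hp =>
      stepBall_mono_length hδ (min_le_left k n)
        ⟨p, (hS p hp).1, rfl, IsDeltaPath.mono_length (hS p hp).2 (min_le_right k n)⟩
    calc (S.encard : ℝ≥0∞) ≤ (stepBall δ x₀ k).encard * Vgrowth δ x k ^ m :=
          Set.encard_le_encard_mul_of_mapsTo (hbg.finite_stepBall δ x₀ k) hmaps fun y hy => ?_
      _ ≤ Vgrowth δ x k * Vgrowth δ x k ^ m := by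
          gcongr; exact encard_stepBall_le_Vgrowth hx₀ k
      _ = Vgrowth δ x k ^ (m + 1) := (pow_succ' _ _).symm
    -- shifting time by `k'` embeds the fibre over `y` into a separated family starting at `y`
    have hSy : ∀ p ∈ S ∩ (fun p => p k') ⁻¹' {y}, IsPseudoOrbit id δ n x₀ p :=
      fun p hp => hS p hp.1
    have hsepy : IsSepFamily n R (S ∩ (fun p => p k') ⁻¹' {y}) :=
      fun p hp q hq => hsep p hp.1 q hq.1
    rw [← (injOn_shift_of_isSepFamily hδ hR' (min_le_right k n) hSy hsepy).encard_image]
    refine ih (by rw [Nat.succ_mul] at hn; omega) (mem_deltaComponent_of_mem_stepBall hx₀ hy) ?_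
      (isSepFamily_image_shift hδ hR' (min_le_right k n) hSy hsepy)
    rintro _ ⟨p, hp, rfl⟩
    exact ⟨by simpa using hp.2, IsDeltaPath.shift (hS p hp.1).2 k'⟩

end SepCard

section Subexponential

variable {X : Type*} [MetricSpace X] {δ R : ℝ} {k : ℕ}

theorem sepCard_id_le_Vgrowth_pow (hbg : HasBoundedGeometry X) (hδ : 0 ≤ δ) (hk : 0 < k)
    (hR : 2 * k * δ < R) (x : X) (n : ℕ) : sepCard id n R δ x ≤ Vgrowth δ x k ^ (n / k + 1) :=
  sepCard_le fun _ hS hsep => encard_le_Vgrowth_pow hbg hδ hR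
    (by rw [mul_comm]; exact (Nat.lt_mul_div_succ n hk).le) (self_mem_deltaComponent δ x) hS hsep

theorem limsup_elog_sepCard_div_le (hbg : HasBoundedGeometry X) (hδ : 0 ≤ δ) (hk : 0 < k)
    (hR : 2 * k * δ < R) (x : X) :
    atTop.limsup (fun n : ℕ => elog (sepCard id n R δ x) / n) ≤
      2 * (elog (Vgrowth δ x k) / k) := by
  refine limsup_le_of_le (by isBoundedDefault) ?_
  filter_upwards [eventually_ge_atTop k] with n hn
  refine ENNReal.div_le_of_le_mul ?_
  have hblocks : (n / k + 1) * k ≤ 2 * n := by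
    have := Nat.div_mul_le_self n k
    rw [add_one_mul]; omega
  calc elog (sepCard id n R δ x) ≤ elog (Vgrowth δ x k ^ (n / k + 1)) :=
        elog_mono (sepCard_id_le_Vgrowth_pow hbg hδ hk hR x n)
    _ = ((n / k + 1) * k : ℕ) * (elog (Vgrowth δ x k) / k) := by
        rw [elog_pow, Nat.cast_mul, mul_assoc,
          ENNReal.mul_div_cancel (Nat.cast_ne_zero.2 hk.ne') (ENNReal.natCast_ne_top k)]
    _ ≤ (2 * n : ℕ) * (elog (Vgrowth δ x k) / k) := by gcongr
    _ = 2 * (elog (Vgrowth δ x k) / k) * n := by push_cast; ring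

theorem coarseEntropyAt_id_eq_zero (hbg : HasBoundedGeometry X) (x : X)
    (H : ∀ δ : ℝ, 0 < δ →
      Tendsto (fun l : ℕ => elog (Vgrowth δ x l) / (l : ℝ≥0∞)) atTop (nhds 0)) :
    coarseEntropyAt id x = 0 := by
  refine nonpos_iff_eq_zero.1 (iSup₂_le fun δ hδ => ?_)
  have hbound : ∀ k : ℕ, 0 < k → ⨅ (R : ℝ) (_ : 0 < R),
      atTop.limsup (fun n : ℕ => elog (sepCard id n R δ x) / n) ≤
        2 * (elog (Vgrowth δ x k) / k) := fun k hk =>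
    iInf₂_le_of_le (2 * k * δ + 1) (by positivity)
      (limsup_elog_sepCard_div_le hbg hδ.le hk (lt_add_one _) x)
  have hlim := ENNReal.Tendsto.const_mul (a := 2) (H δ hδ) (Or.inr ENNReal.ofNat_ne_top)
  rw [mul_zero] at hlim
  exact ge_of_tendsto hlim ((eventually_gt_atTop 0).mono hbound)

end Subexponential

section Exponential

variable {X : Type*} [MetricSpace X] {δ R : ℝ} {l m : ℕ} {x x₀ : X}

theorem exists_separated_subset_encard_le_mul (hR : 0 ≤ R) {C : ℕ}
    (hC : ∀ z : X, (closedBall z R).encard ≤ C) {F : Set X} (hF : F.Finite) :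
    ∃ T ⊆ F, (∀ a ∈ T, ∀ b ∈ T, a ≠ b → R ≤ dist a b) ∧ F.encard ≤ C * T.encard := by
  set ε := R.toNNReal
  have hpack : packingNumber ε F ≠ ⊤ :=
    ne_top_of_le_ne_top hF.encard_lt_top.ne (packingNumber_le_encard_self F)
  have hT : (maximalSeparatedSet ε F).Finite := hF.subset maximalSeparatedSet_subset
  refine ⟨maximalSeparatedSet ε F, maximalSeparatedSet_subset, fun a ha b hb hab => ?_, ?_⟩
  · have hab : (ε : ℝ≥0∞) < edist a b := isSeparated_maximalSeparatedSet ha hb hab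
    rw [edist_dist, ENNReal.coe_lt_ofReal, Real.coe_toNNReal _ hR] at hab
    exact hab.le
  · have hcover := (isCover_maximalSeparatedSet hpack).subset_iUnion_closedBall
    rw [Real.coe_toNNReal _ hR, ← hT.coe_toFinset] at hcover
    calc F.encard ≤ ∑ y ∈ hT.toFinset, (closedBall y R).encard :=
          (Set.encard_le_encard (by simpa using hcover)).trans (Finset.set_encard_biUnion_le _ _)
      _ ≤ ∑ _y ∈ hT.toFinset, (C : ℕ∞) := Finset.sum_le_sum fun y _ => hC y
      _ = C * (maximalSeparatedSet ε F).encard := by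
          simp [hT.encard_eq_coe_toFinset_card, mul_comm]

theorem exists_deltaPaths_through_loops (hδ : 0 ≤ δ) (hl : 0 < l) (hx₀ : x₀ ∈ stepBall δ x m)
    {T : Set X} (hT : T ⊆ stepBall δ x₀ l) :
    ∃ path : (ℕ → X) → ℕ → X, ∀ w : ℕ → X, path w 0 = x ∧ (∀ n, IsDeltaPath δ n (path w)) ∧
      ∀ q, w q ∈ T → path w (m + (2 * l * q + l)) = w q := by
  obtain ⟨a, ha0, ham, ha : IsDeltaPath δ m a⟩ := hx₀
  have hloop : ∀ y, ∃ c : ℕ → X,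
      c 0 = x₀ ∧ c (2 * l) = x₀ ∧ IsDeltaPath δ (2 * l) c ∧ (y ∈ T → c l = y) := by
    intro y
    by_cases hy : y ∈ T
    · obtain ⟨c, h0, hcl, h2l, hc⟩ := exists_loop (hT hy)
      exact ⟨c, h0, h2l, hc, fun _ => hcl⟩
    · exact ⟨fun _ => x₀, rfl, rfl, IsDeltaPath.const hδ x₀, fun h => absurd h hy⟩
  choose c hc0 hc2l hc hcl using hloop
  refine ⟨fun w i => if i < m then a i else c (w ((i - m) / (2 * l))) ((i - m) % (2 * l)),
    fun w => ⟨?_, fun n => ?_, fun q hq => ?_⟩⟩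
  · rcases Nat.eq_zero_or_pos m with rfl | hm
    · simp [hc0, ← ham, ha0]
    · simp [hm, ha0]
  · have hloops : IsDeltaPath δ n fun i => c (w (i / (2 * l))) (i % (2 * l)) :=
      IsDeltaPath.periodic (by omega) (fun _ => hc _) (fun _ => hc0 _) (fun _ => hc2l _)
    exact (ha.append hloops (by simp [hc0, ham])).mono_length (Nat.le_add_left n m)
  · simp [Nat.mul_add_div (by omega : 0 < 2 * l), Nat.div_eq_of_lt (by omega : l < 2 * l),
      Nat.mod_eq_of_lt (by omega : l < 2 * l), hcl _ hq]

theorem pow_encard_le_sepCard (hδ : 0 ≤ δ) (hl : 0 < l) (hx₀ : x₀ ∈ stepBall δ x m) {T : Set X}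
    (hT : T ⊆ stepBall δ x₀ l) (hsep : ∀ a ∈ T, ∀ b ∈ T, a ≠ b → R ≤ dist a b) (j : ℕ) :
    (T.encard : ℝ≥0∞) ^ j ≤ sepCard id (m + 2 * l * j) R δ x := by
  obtain ⟨path, hpath⟩ := exists_deltaPaths_through_loops hδ hl hx₀ hT
  let word (g : Fin j → T) (q : ℕ) : X := if h : q < j then g ⟨q, h⟩ else x₀
  have hval (g : Fin j → T) (q : Fin j) : path (word g) (m + (2 * l * q + l)) = g q := by
    have hword : word g q = g q := dif_pos q.2
    rw [(hpath _).2.2 _ (hword ▸ (g q).2), hword]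
  have hsepS : IsSepFamily (m + 2 * l * j) R (range fun g => path (word g)) := by
    rintro _ ⟨g, rfl⟩ _ ⟨g', rfl⟩ hne
    obtain ⟨q, hq⟩ := Function.ne_iff.1 fun h : g = g' => hne (by rw [h])
    dsimp only
    refine le_orbitDist_iff.2 ⟨m + (2 * l * q + l), ?_, ?_⟩
    · have := Nat.mul_le_mul_left (2 * l) (Nat.succ_le_of_lt q.2)
      rw [Nat.mul_succ] at this
      omega
    · rw [hval, hval]
      exact hsep _ (g q).2 _ (g' q).2 (Subtype.coe_ne_coe.2 hq)
  have hinj : Function.Injective fun g => path (word g) := fun g g' h => funext fun q =>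
    Subtype.ext ((hval g q).symm.trans ((congrFun h _).trans (hval g' q)))
  calc (T.encard : ℝ≥0∞) ^ j = ((ENat.card (Fin j → T) : ℕ∞) : ℝ≥0∞) := by
        rw [ENat.card_fun]; simp
    _ ≤ ((range fun g => path (word g)).encard : ℝ≥0∞) := ENat.toENNReal_mono hinj.encard_range
    _ ≤ sepCard id (m + 2 * l * j) R δ x :=
        le_sepCard (by rintro _ ⟨g, rfl⟩; exact ⟨(hpath _).1, (hpath _).2.1 _⟩) hsepS

theorem le_limsup_elog_sepCard_div (hδ : 0 ≤ δ) (hl : 0 < l) (hx₀ : x₀ ∈ stepBall δ x m)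
    {T : Set X} (hTfin : T.Finite) (hT : T ⊆ stepBall δ x₀ l)
    (hsep : ∀ a ∈ T, ∀ b ∈ T, a ≠ b → R ≤ dist a b) {a : ℝ}
    (ha : 2 * l * a < Real.log T.ncard) :
    ENNReal.ofReal a ≤ atTop.limsup fun n : ℕ => elog (sepCard id n R δ x) / n := by
  have hlarge : ∀ᶠ j : ℕ in atTop, a * m ≤ j * (Real.log T.ncard - 2 * l * a) :=
    (tendsto_natCast_atTop_atTop.atTop_mul_const (by linarith)).eventually_ge_atTop _
  have hj : ∀ᶠ j : ℕ in atTop, ENNReal.ofReal a ≤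
      elog (sepCard id (m + 2 * l * j) R δ x) / (m + 2 * l * j : ℕ) := by
    filter_upwards [hlarge, eventually_gt_atTop 0] with j hj hj0
    rw [ENNReal.le_div_iff_mul_le (Or.inl (Nat.cast_ne_zero.2 (by positivity)))
      (Or.inl (ENNReal.natCast_ne_top _))]
    calc ENNReal.ofReal a * (m + 2 * l * j : ℕ) = ENNReal.ofReal (a * (m + 2 * l * j : ℕ)) := by
          rw [ENNReal.ofReal_mul' (Nat.cast_nonneg _), ENNReal.ofReal_natCast]
      _ ≤ ENNReal.ofReal (j * Real.log T.ncard) :=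
          ENNReal.ofReal_le_ofReal (by push_cast; linear_combination hj)
      _ = elog ((T.encard : ℝ≥0∞) ^ j) := by
          rw [elog_pow, ← hTfin.cast_ncard_eq, ENat.toENNReal_coe, elog_natCast,
            ENNReal.ofReal_mul (Nat.cast_nonneg j), ENNReal.ofReal_natCast]
      _ ≤ elog (sepCard id (m + 2 * l * j) R δ x) :=
          elog_mono (pow_encard_le_sepCard hδ hl hx₀ hT hsep j)
  have hsub : Tendsto (fun j => m + 2 * l * j) atTop atTop :=
    tendsto_atTop_mono (fun j => (Nat.le_mul_of_pos_left j (by omega)).trans (Nat.le_add_left _ m))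
      tendsto_id
  exact le_limsup_of_frequently_le (hsub.frequently hj.frequently) (by isBoundedDefault)

theorem ofReal_div_four_le_coarseEntropyAt (hbg : HasBoundedGeometry X) (hδ : 0 < δ) {r : ℝ}
    (hr : 0 < r) (H : ∃ᶠ l : ℕ in atTop, ENNReal.ofReal (Real.exp (r * l)) < Vgrowth δ x l) :
    ENNReal.ofReal (r / 4) ≤ coarseEntropyAt id x := by
  refine le_iSup₂_of_le δ hδ (le_iInf₂ fun R hR => ?_)
  obtain ⟨C, hC⟩ := hbg R hR
  have hlarge : ∀ᶠ l : ℕ in atTop, 0 < l ∧ 2 * Real.log C < r * l :=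
    (eventually_gt_atTop 0).and
      ((tendsto_natCast_atTop_atTop.const_mul_atTop hr).eventually_gt_atTop _)
  obtain ⟨l, hbig, hl, hlC⟩ := (H.and_eventually hlarge).exists
  obtain ⟨x₀, hx₀, hB⟩ : ∃ x₀ ∈ deltaComponent δ x,
      ENNReal.ofReal (Real.exp (r * l)) < (stepBall δ x₀ l).encard := by
    simpa [Vgrowth, lt_iSup_iff] using hbig
  have hBfin := hbg.finite_stepBall δ x₀ l
  obtain ⟨T, hTB, hsep, hBT⟩ := exists_separated_subset_encard_le_mul hR.le hC hBfin
  have hTfin : T.Finite := hBfin.subset hTB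
  have hexp : Real.exp (r * l) < C * T.ncard := by
    have hlt : ENNReal.ofReal (Real.exp (r * l)) < ((C * T.ncard : ℕ) : ℝ≥0∞) := by
      refine hB.trans_le ?_
      rw [Nat.cast_mul, ← ENat.toENNReal_coe, ← ENat.toENNReal_coe, ← ENat.toENNReal_mul,
        hTfin.cast_ncard_eq]
      exact ENat.toENNReal_mono hBT
    rwa [ENNReal.ofReal_lt_iff_lt_toReal (Real.exp_pos _).le (ENNReal.natCast_ne_top _),
      ENNReal.toReal_natCast, Nat.cast_mul] at hlt
  have hCN := (Real.exp_pos _).trans hexp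
  have hC0 : (0 : ℝ) < C := pos_of_mul_pos_left hCN (Nat.cast_nonneg _)
  have hN0 : (0 : ℝ) < T.ncard := pos_of_mul_pos_right hCN (Nat.cast_nonneg _)
  have hlog : 2 * l * (r / 4) < Real.log T.ncard := by
    have := Real.log_lt_log (Real.exp_pos _) hexp
    rw [Real.log_exp, Real.log_mul hC0.ne' hN0.ne'] at this
    linarith
  obtain ⟨m, hm⟩ := hx₀
  exact le_limsup_elog_sepCard_div hδ.le hl hm hTfin hTB hsep hlog

theorem frequently_exp_lt_Vgrowth_mul (hδ : 0 ≤ δ) {r : ℝ} (hr : 0 ≤ r) {κ : ℕ} (hκ : 1 ≤ κ)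
    (H : ∃ᶠ l : ℕ in atTop, ENNReal.ofReal (Real.exp (r * l)) < Vgrowth δ x l) :
    ∃ᶠ l : ℕ in atTop, ENNReal.ofReal (Real.exp (κ * r / 2 * l)) < Vgrowth (κ * δ) x l := by
  rw [frequently_atTop] at H ⊢
  intro N
  obtain ⟨l', hl', hbig⟩ := H (max κ (κ * N))
  have hκl' : κ ≤ l' := (le_max_left _ _).trans hl'
  have hN : N ≤ l' / κ :=
    (Nat.le_div_iff_mul_le hκ).2 (by rw [mul_comm]; exact (le_max_right _ _).trans hl')
  have hcover : l' ≤ κ * (l' / κ + 1) := (Nat.lt_mul_div_succ l' hκ).le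
  have hshort : κ * (l' / κ + 1) ≤ 2 * l' := by
    have := Nat.mul_div_le l' κ
    rw [mul_add_one]
    omega
  refine ⟨l' / κ + 1, by omega, ?_⟩
  have hshort' : (κ : ℝ) * (l' / κ + 1 : ℕ) ≤ 2 * l' := by exact_mod_cast hshort
  calc ENNReal.ofReal (Real.exp (κ * r / 2 * (l' / κ + 1 : ℕ)))
      ≤ ENNReal.ofReal (Real.exp (r * l')) :=
        ENNReal.ofReal_le_ofReal <| Real.exp_le_exp.2 <| by
          nlinarith [mul_le_mul_of_nonneg_left hshort' hr]
    _ < Vgrowth δ x l' := hbig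
    _ ≤ Vgrowth (κ * δ) x (l' / κ + 1) := Vgrowth_le_Vgrowth_mul hδ hκ hcover

theorem exists_frequently_exp_lt_Vgrowth
    (H : 0 < atTop.limsup fun l : ℕ => elog (Vgrowth δ x l) / (l : ℝ≥0∞)) :
    ∃ r > 0, ∃ᶠ l : ℕ in atTop, ENNReal.ofReal (Real.exp (r * l)) < Vgrowth δ x l := by
  obtain ⟨r, -, hr0, hr⟩ := ENNReal.lt_iff_exists_real_btwn.1 H
  refine ⟨r, ENNReal.ofReal_pos.1 hr0, ?_⟩
  refine ((frequently_lt_of_lt_limsup (by isBoundedDefault) hr).and_eventually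
    (eventually_gt_atTop 0)).mono fun l ⟨hl, hl0⟩ => ofReal_exp_lt_of_ofReal_lt_elog ?_
  rw [ENNReal.ofReal_mul' (Nat.cast_nonneg l), ENNReal.ofReal_natCast]
  exact (ENNReal.lt_div_iff_mul_lt (Or.inl (Nat.cast_ne_zero.2 hl0.ne'))
    (Or.inl (ENNReal.natCast_ne_top l))).1 hl

theorem coarseEntropyAt_id_eq_top (hbg : HasBoundedGeometry X) (x : X)
    (H : ∃ δ : ℝ, 0 < δ ∧ 0 < atTop.limsup fun l : ℕ => elog (Vgrowth δ x l) / (l : ℝ≥0∞)) :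
    coarseEntropyAt id x = ⊤ := by
  obtain ⟨δ, hδ, hpos⟩ := H
  obtain ⟨r, hr, hfreq⟩ := exists_frequently_exp_lt_Vgrowth hpos
  refine ENNReal.eq_top_of_forall_nnreal_le fun ρ => ?_
  obtain ⟨κ, hκ⟩ := exists_nat_ge (8 * ρ / r)
  rw [div_le_iff₀ hr] at hκ
  calc (ρ : ℝ≥0∞) = ENNReal.ofReal ρ := ENNReal.ofReal_coe_nnreal.symm
    _ ≤ ENNReal.ofReal ((κ + 1 : ℕ) * r / 2 / 4) := ENNReal.ofReal_le_ofReal (by push_cast; nlinarith)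
    _ ≤ coarseEntropyAt id x :=
        ofReal_div_four_le_coarseEntropyAt hbg (by positivity) (by positivity)
          (frequently_exp_lt_Vgrowth_mul hδ.le hr.le le_add_self hfreq)

end Exponential

/-- For a metric space `X` with bounded geometry and a basepoint `x`:
(i) if `lim_{l→∞} (1/l) log V_δ(l) = 0` for all `δ > 0`, then `h_∞(X) = 0`;
(ii) if `limsup_{l→∞} (1/l) log V_δ(l) > 0` for some `δ > 0`, then `h_∞(X) = ∞`. -/
theorem coarseEntropy_dichotomy_boundedGeometry {X : Type*} [MetricSpace X]
    (hbg : HasBoundedGeometry X) (x : X) :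
    ((∀ δ : ℝ, 0 < δ →
        Filter.Tendsto (fun l : ℕ => elog (Vgrowth δ x l) / (l : ℝ≥0∞))
          Filter.atTop (nhds 0)) →
      coarseEntropyAt (id : X → X) x = 0) ∧
    ((∃ δ : ℝ, 0 < δ ∧
        0 < Filter.atTop.limsup fun l : ℕ => elog (Vgrowth δ x l) / (l : ℝ≥0∞)) →
      coarseEntropyAt (id : X → X) x = ⊤) :=
  ⟨coarseEntropyAt_id_eq_zero hbg x, coarseEntropyAt_id_eq_top hbg x⟩
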